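/- arXiv:1702.05004 — 3 statements merged into one kernel-verified Lean document; each statement's English description precedes it below -/
import Mathlib

section
/- Let $g \in \mathrm{GSp}_{2n}$ (over any field or commutative ring). Then the matrix $X = Q_n\, \iota(g, g)\, Q_n^{-1}$ lies in the Siegel parabolic $P_{4n}$ of $\mathrm{GSp}_{4n}$ (i.e., its lower-left $2n \times 2n$ block is zero), and moreover $d(X) = 1$, where for $X = \begin{pmatrix} A & * \\ 0 & v\,{}^t A^{-1} \end{pmatrix} n'$ with $v$ the multiplier, $A \in \mathrm{GL}_{2n}$, and $n'$ in the unipotent radical, one defines $d(X) = v^{-n}\det(A)$. -/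
open Matrix

/-- The standard symplectic form `J` on a doubled index type. -/
def Jmat (m : Type*) [DecidableEq m] [Fintype m] (R : Type*) [CommRing R] :
    Matrix (m ⊕ m) (m ⊕ m) R :=
  Matrix.fromBlocks 0 1 (-1) 0

/-- The embedding `ι : GSp₂ₙ × GSp₂ₙ → GSp₄ₙ` of the paper (embedding-defn). -/
def iota {n : ℕ} {R : Type*} [CommRing R] (g h : Matrix (Fin n ⊕ Fin n) (Fin n ⊕ Fin n) R) :
    Matrix ((Fin n ⊕ Fin n) ⊕ (Fin n ⊕ Fin n)) ((Fin n ⊕ Fin n) ⊕ (Fin n ⊕ Fin n)) R :=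
  Matrix.fromBlocks
    (Matrix.fromBlocks g.toBlocks₁₁ 0 0 h.toBlocks₁₁)
    (Matrix.fromBlocks (-g.toBlocks₁₂) 0 0 h.toBlocks₁₂)
    (Matrix.fromBlocks (-g.toBlocks₂₁) 0 0 h.toBlocks₂₁)
    (Matrix.fromBlocks g.toBlocks₂₂ 0 0 h.toBlocks₂₂)

/-- The matrix `Q_n` of the paper. -/
def Qmat (n : ℕ) (R : Type*) [CommRing R] :
    Matrix ((Fin n ⊕ Fin n) ⊕ (Fin n ⊕ Fin n)) ((Fin n ⊕ Fin n) ⊕ (Fin n ⊕ Fin n)) R :=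
  Matrix.fromBlocks
    (Matrix.fromBlocks 1 0 0 0) (Matrix.fromBlocks 0 0 0 1)
    (Matrix.fromBlocks 0 0 1 (-1)) (Matrix.fromBlocks 1 1 0 0)

/-!
Conjugating by `Qₙ` turns `ι(g, g)` into a block upper-triangular matrix whose upper-left
`2n × 2n` block is `g` itself, so `d(X) = μ⁻ⁿ det g`. Rescaling the second half of the
coordinates by `μ⁻¹` makes `g` symplectic, and symplectic matrices have determinant one,
whence `det g = μⁿ`.
-/

lemma Jmat_eq_neg_J (l R : Type*) [DecidableEq l] [Fintype l] [CommRing R] :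
    Jmat l R = -J l R := by
  simp [Jmat, J, fromBlocks_neg]

theorem det_eq_pow_of_transpose_mul_J_mul_eq_smul {l R : Type*} [DecidableEq l] [Fintype l]
    [CommRing R] {g : Matrix (l ⊕ l) (l ⊕ l) R} (u : Rˣ)
    (hg : gᵀ * J l R * g = (u : R) • J l R) : g.det = u ^ Fintype.card l := by
  set D : Matrix (l ⊕ l) (l ⊕ l) R := fromBlocks 1 0 0 ((↑u⁻¹ : R) • 1)
  have hD : Dᵀ * J l R * D = (↑u⁻¹ : R) • J l R := by
    simp [D, J, fromBlocks_transpose, fromBlocks_multiply, fromBlocks_smul]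
  have hgD : g * D ∈ symplecticGroup l R := by
    have hconj : (g * D)ᵀ * J l R * (g * D) = Dᵀ * (gᵀ * J l R * g) * D := by
      simp only [transpose_mul, Matrix.mul_assoc]
    rw [SymplecticGroup.mem_iff', hconj, hg, Matrix.mul_smul, Matrix.smul_mul, hD, smul_smul,
      Units.mul_inv, one_smul]
  have hdetD : D.det = (↑u⁻¹ : R) ^ Fintype.card l := by
    simp [D, det_fromBlocks_zero₂₁]
  have hdet_gD := SymplecticGroup.det_eq_one hgD
  rw [det_mul, hdetD] at hdet_gD
  calc g.det = g.det * (↑u⁻¹ : R) ^ Fintype.card l * (u : R) ^ Fintype.card l := by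
        rw [mul_assoc, ← mul_pow, Units.inv_mul, one_pow, mul_one]
    _ = u ^ Fintype.card l := by rw [hdet_gD, one_mul]

def Qinv (n : ℕ) (R : Type*) [CommRing R] :
    Matrix ((Fin n ⊕ Fin n) ⊕ (Fin n ⊕ Fin n)) ((Fin n ⊕ Fin n) ⊕ (Fin n ⊕ Fin n)) R :=
  fromBlocks
    (fromBlocks 1 0 1 0) (fromBlocks 0 0 0 (-1))
    (fromBlocks 0 (-1) 0 1) (fromBlocks 1 0 0 0)

lemma Qmat_mul_Qinv (n : ℕ) (R : Type*) [CommRing R] : Qmat n R * Qinv n R = 1 := by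
  simp [Qmat, Qinv, fromBlocks_multiply, fromBlocks_add, ← fromBlocks_one]

lemma Qmat_mul_iota_mul_Qinv {n : ℕ} {R : Type*} [CommRing R]
    (g : Matrix (Fin n ⊕ Fin n) (Fin n ⊕ Fin n) R) :
    Qmat n R * iota g g * Qinv n R =
      fromBlocks g
        (fromBlocks (-g.toBlocks₁₂) 0 0 (-g.toBlocks₂₁))
        0
        (fromBlocks g.toBlocks₂₂ (-g.toBlocks₂₁) (-g.toBlocks₁₂) g.toBlocks₁₁) := by
  conv_rhs => rw [← fromBlocks_toBlocks g]
  simp [Qmat, iota, Qinv, fromBlocks_multiply, fromBlocks_add]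

/-- Lemma 2.2 iii) of the paper: for `g ∈ GSp₂ₙ` with multiplier `μ`, the matrix
`X = Qₙ ι(g,g) Qₙ⁻¹` lies in the Siegel parabolic `P₄ₙ` (lower-left `2n × 2n` block zero)
and satisfies `d(X) = μ^{-n} det(A) = 1`, where `A` is the upper-left `2n × 2n` block. -/
theorem stmt_5 (n : ℕ) (F : Type*) [Field F]
    (g : Matrix (Fin n ⊕ Fin n) (Fin n ⊕ Fin n) F) (μ : F) (hμ : μ ≠ 0)
    (hg : gᵀ * Jmat (Fin n) F * g = μ • Jmat (Fin n) F) :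
    (Qmat n F * iota g g * (Qmat n F)⁻¹).toBlocks₂₁ = 0 ∧
      (μ ^ n)⁻¹ * ((Qmat n F * iota g g * (Qmat n F)⁻¹).toBlocks₁₁).det = 1 := by
  have hX : Qmat n F * iota g g * (Qmat n F)⁻¹ = Qmat n F * iota g g * Qinv n F := by
    rw [inv_eq_right_inv (Qmat_mul_Qinv n F)]
  have hgJ : gᵀ * J (Fin n) F * g = (Units.mk0 μ hμ : F) • J (Fin n) F := by
    simpa [Jmat_eq_neg_J] using hg
  have hdet : g.det = μ ^ n := by
    simpa using det_eq_pow_of_transpose_mul_J_mul_eq_smul _ hgJ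
  rw [hX, Qmat_mul_iota_mul_Qinv, toBlocks_fromBlocks₂₁, toBlocks_fromBlocks₁₁, hdet]
  exact ⟨rfl, inv_mul_cancel₀ (pow_ne_zero n hμ)⟩
end

section
/- Let $V$ be an upper triangular nilpotent real $n \times n$ matrix, let $\theta_1,\ldots,\theta_n$ be real numbers, and set $C = \mathrm{diag}(\cos\theta_1,\ldots,\cos\theta_n)$, $S = \mathrm{diag}(\sin\theta_1,\ldots,\sin\theta_n)$. Assume $I_n + SVS$ is invertible, and let $U = I_n + V$, $Z = -(I_n + SVS)^{-1} S V C$. Then there exists $p = \begin{pmatrix} B & * \\ 0 & {}^t B^{-1}\end{pmatrix} \in \mathrm{Sp}_{4n}(\mathbb{R})$ with $\det(B) = 1$ such that $\begin{pmatrix} C & 0 & 0 & S \\ 0 & C & S & 0 \\ 0 & -S & C & 0 \\ -S & 0 & 0 & C \end{pmatrix}\begin{pmatrix} U & & & \\ & I_n & & \\ & & {}^t U^{-1} & \\ & & & I_n\end{pmatrix} = p\,\begin{pmatrix} I_n & & & \\ & I_n & & \\ & {}^t Z & I_n & \\ Z & & & I_n\end{pmatrix}\begin{pmatrix} C & 0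 & 0 & S \\ 0 & C & S & 0 \\ 0 & -S & C & 0 \\ -S & 0 & 0 & C \end{pmatrix}$. -/
/-!
The block rotation `k` built from `C` and `S` is orthogonal and symplectic, so the identity says
`X = p · n(W)` for the symplectic matrix `X = k · diag(U, 1, ᵗU⁻¹, 1) · ᵗk`, where
`n(W) = [[1, 0], [W, 1]]` and `W = [[0, ᵗZ], [Z, 0]]`. A symplectic `X` factors in this way, with
`p` in the Siegel parabolic, as soon as its lower blocks satisfy `X₂₂ W = X₂₁` with `W` symmetric;
then `B = X₁₁ - X₁₂ W` satisfies `ᵗB X₂₂ = 1`. Here `X₂₂ = diag(S² + C ᵗU⁻¹ C, SUS + C²)` has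
triangular blocks with unit diagonal, so `det B = 1`, and `X₂₂ W = X₂₁` comes down to two identities
of `n × n` matrices, using `S² + C² = 1` and `SUS + C² = 1 + SVS`.
-/

open Matrix

namespace Matrix

section Symplectic

variable {l R : Type*} [Fintype l] [DecidableEq l] [CommRing R]

lemma Jmat_eq_neg_J : Jmat l R = -J l R := by
  simp [Jmat, J, fromBlocks_neg]

lemma transpose_mul_Jmat_mul_self_of_mem_symplecticGroup {A : Matrix (l ⊕ l) (l ⊕ l) R}
    (hA : A ∈ symplecticGroup l R) : Aᵀ * Jmat l R * A = Jmat l R := by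
  rw [Jmat_eq_neg_J, mul_neg, neg_mul, SymplecticGroup.mem_iff'.mp hA]

variable {A B : Matrix l l R}

lemma fromBlocks_neg_mem_symplecticGroup (hAB : Aᵀ * B = Bᵀ * A) (hAA : Aᵀ * A + Bᵀ * B = 1) :
    fromBlocks A B (-B) A ∈ symplecticGroup l R :=
  SymplecticGroup.fromBlocks_mem_iff.2 ⟨by simp [hAB], hAB.symm, by simpa using hAA⟩

lemma fromBlocks_neg_transpose_mul_self (hAB : Aᵀ * B = Bᵀ * A) (hAA : Aᵀ * A + Bᵀ * B = 1) :
    (fromBlocks A B (-B) A)ᵀ * fromBlocks A B (-B) A = 1 := by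
  rw [fromBlocks_transpose, fromBlocks_multiply, ← fromBlocks_one, transpose_neg]
  refine fromBlocks_inj.2 ⟨by simpa using hAA, by simp [hAB], by simp [hAB], ?_⟩
  simpa [add_comm] using hAA

lemma exists_fromBlocks_zero₂₁_mul_of_mem_symplecticGroup {X : Matrix (l ⊕ l) (l ⊕ l) R}
    (hX : X ∈ symplecticGroup l R) {W : Matrix l l R} (hW : Wᵀ = W)
    (hXW : X.toBlocks₂₂ * W = X.toBlocks₂₁) :
    ∃ B E : Matrix l l R, B.det * X.toBlocks₂₂.det = 1 ∧
      fromBlocks B E 0 (B⁻¹)ᵀ ∈ symplecticGroup l R ∧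
      X = fromBlocks B E 0 (B⁻¹)ᵀ * fromBlocks 1 0 W 1 := by
  set B := X.toBlocks₁₁ - X.toBlocks₁₂ * W
  set p := fromBlocks B X.toBlocks₁₂ 0 X.toBlocks₂₂
  have hX_eq : X = p * fromBlocks 1 0 W 1 := by
    conv_lhs => rw [← fromBlocks_toBlocks X]
    simp [p, B, fromBlocks_multiply, hXW]
  have hp : p ∈ symplecticGroup l R := by
    have hN : fromBlocks 1 0 W 1 * fromBlocks 1 0 (-W) 1 = (1 : Matrix (l ⊕ l) (l ⊕ l) R) := by
      simp [fromBlocks_multiply]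
    have hp_eq : p = X * fromBlocks 1 0 (-W) 1 := by rw [hX_eq, mul_assoc, hN, mul_one]
    rw [hp_eq]
    exact mul_mem hX (SymplecticGroup.fromBlocks_mem_iff.2 ⟨by simp [hW], by simp, by simp⟩)
  have hBX : Bᵀ * X.toBlocks₂₂ = 1 := by
    simpa using (SymplecticGroup.fromBlocks_mem_iff.1 hp).2.2
  have hX₂₂ : (B⁻¹)ᵀ = X.toBlocks₂₂ := by
    rw [transpose_nonsing_inv, inv_eq_right_inv hBX]
  refine ⟨B, X.toBlocks₁₂, ?_, ?_, ?_⟩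
  · rw [← det_transpose B, ← det_mul, hBX, det_one]
  · rwa [hX₂₂]
  · rwa [hX₂₂]

end Symplectic

section Triangular

variable {ι R : Type*} [Fintype ι] [LinearOrder ι] [CommRing R]

lemma IsUpperTriangular.mul_apply_self {M N : Matrix ι ι R} (hM : M.IsUpperTriangular)
    (hN : N.IsUpperTriangular) (i : ι) : (M * N) i i = M i i * N i i := by
  rw [mul_apply, Finset.sum_eq_single i]
  · intro k _ hk
    rcases lt_or_gt_of_ne hk with h | h
    · rw [hM h, zero_mul]
    · rw [hN h, mul_zero]
  · simp

variable [DecidableEq ι]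

lemma IsUpperTriangular.nonsing_inv {U : Matrix ι ι R} (hU : U.IsUpperTriangular) :
    U⁻¹.IsUpperTriangular := by
  by_cases hdet : IsUnit U.det
  · have := U.invertibleOfIsUnitDet hdet
    exact blockTriangular_inv_of_blockTriangular hU
  · rw [nonsing_inv_apply_not_isUnit U hdet]
    exact blockTriangular_zero

lemma IsUpperTriangular.nonsing_inv_apply_self {U : Matrix ι ι R} (hU : U.IsUpperTriangular)
    (hU₁ : ∀ i, U i i = 1) (i : ι) : U⁻¹ i i = 1 := by
  have hdet : IsUnit U.det := by simp [det_of_isUpperTriangular hU, hU₁]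
  have h := congr_fun₂ (nonsing_inv_mul U hdet) i i
  rwa [hU.nonsing_inv.mul_apply_self hU, hU₁, mul_one, one_apply_eq] at h

lemma det_diagonal_add_diagonal_mul_mul_diagonal_eq_one {M : Matrix ι ι R} (hM : M.IsUpperTriangular)
    (hM₁ : ∀ i, M i i = 1) {d a : ι → R} (hda : ∀ i, d i + a i * a i = 1) :
    (diagonal d + diagonal a * M * diagonal a).det = 1 := by
  have h : (diagonal d + diagonal a * M * diagonal a).IsUpperTriangular :=
    (blockTriangular_diagonal d).add
      (((blockTriangular_diagonal a).mul hM).mul (blockTriangular_diagonal a))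
  simp [det_of_isUpperTriangular h, hM₁, hda]

end Triangular

end Matrix

-- The upper-right block of `X₂₂ W = X₂₁`, with `Y = ᵗ(1 + V)⁻¹` and `T = ᵗV`.
lemma sq_add_mul_mul_mul_eq {A : Type*} [Ring A] {C S Y T : A} (hCS : C * S = S * C)
    (hSC : S * S + C * C = 1) (hY : Y * (1 + T) = 1) :
    (S * S + C * Y * C) * (C * T * S) = (S * C - C * Y * S) * (1 + S * T * S) := by
  refine (sub_eq_zero.mp ?_).symm
  calc (S * C - C * Y * S) * (1 + S * T * S) - (S * S + C * Y * C) * (C * T * S)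
      = (S * C - C * S) - C * (Y * (1 + T) - 1) * S - C * Y * (S * S + C * C - 1) * T * S
          + S * (C * S - S * C) * T * S := by noncomm_ring
    _ = 0 := by simp [hCS, hSC, hY]

section BlockRotation

variable {ι R : Type*} [CommRing R]

def blockRotation (C S : Matrix ι ι R) : Matrix ((ι ⊕ ι) ⊕ (ι ⊕ ι)) ((ι ⊕ ι) ⊕ (ι ⊕ ι)) R :=
  fromBlocks (fromBlocks C 0 0 C) (fromBlocks 0 S S 0) (fromBlocks 0 (-S) (-S) 0)
    (fromBlocks C 0 0 C)

lemma blockRotation_eq_fromBlocks_neg (C S : Matrix ι ι R) : blockRotation C S =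
    fromBlocks (fromBlocks C 0 0 C) (fromBlocks 0 S S 0) (-fromBlocks 0 S S 0)
      (fromBlocks C 0 0 C) := by
  simp [blockRotation, fromBlocks_neg]

variable [Fintype ι] [DecidableEq ι]

noncomputable def blockDiagInvTranspose (U : Matrix ι ι R) :
    Matrix ((ι ⊕ ι) ⊕ (ι ⊕ ι)) ((ι ⊕ ι) ⊕ (ι ⊕ ι)) R :=
  fromBlocks (fromBlocks U 0 0 1) 0 0 (fromBlocks (U⁻¹)ᵀ 0 0 1)

variable {C S : Matrix ι ι R}

lemma blockRotation_mem_symplecticGroup (hC : Cᵀ = C) (hS : Sᵀ = S) (hCS : C * S = S * C)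
    (hSC : S * S + C * C = 1) : blockRotation C S ∈ symplecticGroup (ι ⊕ ι) R := by
  rw [blockRotation_eq_fromBlocks_neg]
  refine fromBlocks_neg_mem_symplecticGroup ?_ ?_
  · simp [fromBlocks_transpose, fromBlocks_multiply, hC, hS, hCS]
  · simp [fromBlocks_transpose, fromBlocks_multiply, fromBlocks_add, hC, hS, hSC,
      add_comm (C * C)]

lemma transpose_blockRotation_mul_self (hC : Cᵀ = C) (hS : Sᵀ = S) (hCS : C * S = S * C)
    (hSC : S * S + C * C = 1) : (blockRotation C S)ᵀ * blockRotation C S = 1 := by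
  rw [blockRotation_eq_fromBlocks_neg]
  refine fromBlocks_neg_transpose_mul_self ?_ ?_
  · simp [fromBlocks_transpose, fromBlocks_multiply, hC, hS, hCS]
  · simp [fromBlocks_transpose, fromBlocks_multiply, fromBlocks_add, hC, hS, hSC,
      add_comm (C * C)]

lemma blockDiagInvTranspose_mem_symplecticGroup {U : Matrix ι ι R} (hU : IsUnit U.det) :
    blockDiagInvTranspose U ∈ symplecticGroup (ι ⊕ ι) R := by
  refine SymplecticGroup.fromBlocks_mem_iff.2 ⟨by simp, by simp, ?_⟩
  simp [fromBlocks_transpose, fromBlocks_multiply, ← transpose_mul, nonsing_inv_mul U hU]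

lemma toBlocks₂₂_blockRotation_conj (U : Matrix ι ι R) :
    (blockRotation C S * blockDiagInvTranspose U * (blockRotation C S)ᵀ).toBlocks₂₂ =
      fromBlocks (S * Sᵀ + C * (U⁻¹)ᵀ * Cᵀ) 0 0 (S * U * Sᵀ + C * Cᵀ) := by
  simp [blockRotation, blockDiagInvTranspose, fromBlocks_transpose, fromBlocks_multiply,
    fromBlocks_add]

lemma toBlocks₂₁_blockRotation_conj (U : Matrix ι ι R) :
    (blockRotation C S * blockDiagInvTranspose U * (blockRotation C S)ᵀ).toBlocks₂₁ =
      fromBlocks 0 (C * (U⁻¹)ᵀ * Sᵀ - S * Cᵀ) (C * Sᵀ - S * U * Cᵀ) 0 := by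
  simp [blockRotation, blockDiagInvTranspose, fromBlocks_transpose, fromBlocks_multiply,
    fromBlocks_add, sub_eq_add_neg, add_comm]

variable {V Z : Matrix ι ι R}

lemma toBlocks₂₂_blockRotation_conj_mul_eq_toBlocks₂₁ (hC : Cᵀ = C) (hS : Sᵀ = S) (hCS : C * S = S * C)
    (hSC : S * S + C * C = 1) (hU : IsUnit (1 + V).det) (hSVS : IsUnit (1 + S * V * S).det)
    (hZ : Z = -((1 + S * V * S)⁻¹ * (S * V * C))) :
    (blockRotation C S * blockDiagInvTranspose (1 + V) * (blockRotation C S)ᵀ).toBlocks₂₂ *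
        fromBlocks 0 Zᵀ Z 0 =
      (blockRotation C S * blockDiagInvTranspose (1 + V) * (blockRotation C S)ᵀ).toBlocks₂₁ := by
  have lower : (S * (1 + V) * S + C * C) * Z = C * S - S * (1 + V) * C := by
    have h₁ : S * (1 + V) * S + C * C = 1 + S * V * S := by
      calc S * (1 + V) * S + C * C = (S * S + C * C) + S * V * S := by noncomm_ring
        _ = 1 + S * V * S := by rw [hSC]
    have h₂ : C * S - S * (1 + V) * C = -(S * V * C) := by rw [hCS]; noncomm_ring
    rw [h₁, h₂, hZ, mul_neg, mul_nonsing_inv_cancel_left _ _ hSVS]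
  have upper : (S * S + C * ((1 + V)⁻¹)ᵀ * C) * Zᵀ = C * ((1 + V)⁻¹)ᵀ * S - S * C := by
    have hY : ((1 + V)⁻¹)ᵀ * (1 + Vᵀ) = 1 := by
      simpa [transpose_mul] using congrArg transpose (mul_nonsing_inv _ hU)
    have hZT : Zᵀ = -(C * Vᵀ * S * (1 + S * Vᵀ * S)⁻¹) := by
      simp [hZ, transpose_nonsing_inv, hC, hS, mul_assoc]
    have hSVS' : IsUnit (1 + S * Vᵀ * S).det := by
      rwa [← det_transpose, transpose_add, transpose_one, transpose_mul, transpose_mul, hS,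
        ← mul_assoc] at hSVS
    rw [hZT, mul_neg, ← mul_assoc, sq_add_mul_mul_mul_eq hCS hSC hY,
      mul_nonsing_inv_cancel_right _ _ hSVS', neg_sub]
  rw [toBlocks₂₂_blockRotation_conj, toBlocks₂₁_blockRotation_conj, hC, hS, fromBlocks_multiply]
  simp [lower, upper]

lemma det_toBlocks₂₂_blockRotation_conj [LinearOrder ι] {c s : ι → R}
    (hsc : ∀ i, s i * s i + c i * c i = 1) {U : Matrix ι ι R} (hU : U.IsUpperTriangular)
    (hU₁ : ∀ i, U i i = 1) :
    (blockRotation (diagonal c) (diagonal s) * blockDiagInvTranspose U *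
      (blockRotation (diagonal c) (diagonal s))ᵀ).toBlocks₂₂.det = 1 := by
  rw [toBlocks₂₂_blockRotation_conj, det_fromBlocks_zero₂₁, diagonal_transpose,
    diagonal_transpose]
  have h₁ : (diagonal s * diagonal s + diagonal c * (U⁻¹)ᵀ * diagonal c).det = 1 := by
    rw [← det_transpose]
    simpa [diagonal_mul_diagonal, mul_assoc] using
      det_diagonal_add_diagonal_mul_mul_diagonal_eq_one hU.nonsing_inv
        (hU.nonsing_inv_apply_self hU₁) (d := fun i => s i * s i) hsc
  have h₂ : (diagonal s * U * diagonal s + diagonal c * diagonal c).det = 1 := by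
    rw [add_comm, diagonal_mul_diagonal]
    exact det_diagonal_add_diagonal_mul_mul_diagonal_eq_one hU hU₁ fun i => by rw [add_comm, hsc]
  rw [h₁, h₂, mul_one]

end BlockRotation

/-- The matrix identity (Blambdanlemma1eq12) of the paper: the rotation-type block matrix
times `diag(U, 1, ᵗU⁻¹, 1)` equals a Siegel-parabolic element `p = [[B,*],[0,ᵗB⁻¹]]` with
`det B = 1` times the unipotent matrix built from `Z = -(1+SVS)⁻¹SVC` times the rotation
matrix. -/
theorem stmt_11 (n : ℕ) (V : Matrix (Fin n) (Fin n) ℝ)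
    (hV : ∀ i j : Fin n, j ≤ i → V i j = 0)
    (θ : Fin n → ℝ)
    (hinv : IsUnit (1 + Matrix.diagonal (fun j => Real.sin (θ j)) * V *
      Matrix.diagonal (fun j => Real.sin (θ j)))) :
    ∃ Bm Em : Matrix (Fin n ⊕ Fin n) (Fin n ⊕ Fin n) ℝ,
      Bm.det = 1 ∧
      (Matrix.fromBlocks Bm Em 0 (Bm⁻¹)ᵀ)ᵀ * Jmat (Fin n ⊕ Fin n) ℝ *
          Matrix.fromBlocks Bm Em 0 (Bm⁻¹)ᵀ = Jmat (Fin n ⊕ Fin n) ℝ ∧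
      (Matrix.fromBlocks
          (Matrix.fromBlocks (Matrix.diagonal fun j => Real.cos (θ j)) 0 0
            (Matrix.diagonal fun j => Real.cos (θ j)))
          (Matrix.fromBlocks 0 (Matrix.diagonal fun j => Real.sin (θ j))
            (Matrix.diagonal fun j => Real.sin (θ j)) 0)
          (Matrix.fromBlocks 0 (-Matrix.diagonal fun j => Real.sin (θ j))
            (-Matrix.diagonal fun j => Real.sin (θ j)) 0)
          (Matrix.fromBlocks (Matrix.diagonal fun j => Real.cos (θ j)) 0 0
            (Matrix.diagonal fun j => Real.cos (θ j)))) *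
        (Matrix.fromBlocks (Matrix.fromBlocks (1 + V) 0 0 1) 0 0
          (Matrix.fromBlocks (((1 + V)⁻¹)ᵀ) 0 0 1))
      = Matrix.fromBlocks Bm Em 0 (Bm⁻¹)ᵀ *
          (Matrix.fromBlocks 1 0
            (Matrix.fromBlocks 0
              ((-((1 + Matrix.diagonal (fun j => Real.sin (θ j)) * V *
                    Matrix.diagonal (fun j => Real.sin (θ j)))⁻¹ *
                  (Matrix.diagonal (fun j => Real.sin (θ j)) * V *
                    Matrix.diagonal (fun j => Real.cos (θ j)))))ᵀ)
              (-((1 + Matrix.diagonal (fun j => Real.sin (θ j)) * V *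
                    Matrix.diagonal (fun j => Real.sin (θ j)))⁻¹ *
                  (Matrix.diagonal (fun j => Real.sin (θ j)) * V *
                    Matrix.diagonal (fun j => Real.cos (θ j)))))
              0)
            1) *
          (Matrix.fromBlocks
            (Matrix.fromBlocks (Matrix.diagonal fun j => Real.cos (θ j)) 0 0
              (Matrix.diagonal fun j => Real.cos (θ j)))
            (Matrix.fromBlocks 0 (Matrix.diagonal fun j => Real.sin (θ j))
              (Matrix.diagonal fun j => Real.sin (θ j)) 0)
            (Matrix.fromBlocks 0 (-Matrix.diagonal fun j => Real.sin (θ j))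
              (-Matrix.diagonal fun j => Real.sin (θ j)) 0)
            (Matrix.fromBlocks (Matrix.diagonal fun j => Real.cos (θ j)) 0 0
              (Matrix.diagonal fun j => Real.cos (θ j)))) := by
  set C := diagonal fun j => Real.cos (θ j)
  set S := diagonal fun j => Real.sin (θ j)
  set Z := -((1 + S * V * S)⁻¹ * (S * V * C))
  have hsc j : Real.sin (θ j) * Real.sin (θ j) + Real.cos (θ j) * Real.cos (θ j) = 1 := by
    rw [← sq, ← sq, Real.sin_sq_add_cos_sq]
  have hC : Cᵀ = C := diagonal_transpose _
  have hS : Sᵀ = S := diagonal_transpose _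
  have hCS : C * S = S * C := by simp only [C, S, diagonal_mul_diagonal, mul_comm]
  have hSC : S * S + C * C = 1 := by
    simp only [C, S, diagonal_mul_diagonal, diagonal_add, hsc, diagonal_one]
  have hU : (1 + V).IsUpperTriangular := fun i j (hij : j < i) => by
    rw [Matrix.add_apply, one_apply_ne (ne_of_gt hij), hV i j hij.le, add_zero]
  have hU₁ i : (1 + V) i i = 1 := by rw [Matrix.add_apply, one_apply_eq, hV i i le_rfl, add_zero]
  have hUdet : IsUnit (1 + V).det := by simp [det_of_isUpperTriangular hU, hU₁]
  have hM := blockRotation_mem_symplecticGroup hC hS hCS hSC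
  have hX := mul_mem (mul_mem hM (blockDiagInvTranspose_mem_symplecticGroup hUdet))
    (SymplecticGroup.transpose_mem hM)
  obtain ⟨B, E, hdet, hp, hfac⟩ := exists_fromBlocks_zero₂₁_mul_of_mem_symplecticGroup hX
    (by simp [fromBlocks_transpose])
    (toBlocks₂₂_blockRotation_conj_mul_eq_toBlocks₂₁ hC hS hCS hSC hUdet ((isUnit_iff_isUnit_det _).mp hinv) rfl)
  refine ⟨B, E, ?_, transpose_mul_Jmat_mul_self_of_mem_symplecticGroup hp, ?_⟩
  · rwa [det_toBlocks₂₂_blockRotation_conj hsc hU hU₁, mul_one] at hdet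
  · have h := congrArg (· * blockRotation C S) hfac
    rwa [mul_assoc _ (blockRotation C S)ᵀ, transpose_blockRotation_mul_self hC hS hCS hSC,
      mul_one] at h
end

section
/- Let $F$ be a field. For $0 \le r \le n$ define $\alpha_r \in \mathrm{Sp}_{4n}(F)$ in $n\times n$ block form by $\alpha_r = \begin{pmatrix} I_n & 0 & 0 & 0 \\ 0 & I_n & 0 & 0 \\ 0 & \tilde I_r & I_n & 0 \\ \tilde I_r & 0 & 0 & I_n \end{pmatrix}$ with $\tilde I_r = \begin{pmatrix} 0_{n-r} & 0 \\ 0 & I_r \end{pmatrix}$. Then the double cosets $P_{4n}(F)\,\alpha_r\, H_{2n,2n}(F)$ for $r = 0, 1, \ldots, n$ are pairwise disjoint, where $P_{4n}$ is the Siegel parabolic of $\mathrm{GSp}_{4n}$ and $H_{2n,2n}$ is the image of the diagonal embedding of $\{(g,g') \in \mathrm{GSp}_{2n}\times\mathrm{GSp}_{2n} : \mu(g) = \mu(g')\}$ in $\mathrm{GSp}_{4n}$. -/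
open Matrix

/-- The matrix `Ĩᵣ = diag(0_{n-r}, I_r)`. -/
def Itil (n r : ℕ) (F : Type*) [Field F] : Matrix (Fin n) (Fin n) F :=
  Matrix.diagonal fun i => if n - r ≤ (i : ℕ) then 1 else 0

/-- The double coset representative `αᵣ ∈ Sp₄ₙ` of the paper (alphardefeq). -/
def alphaMat (n r : ℕ) (F : Type*) [Field F] :
    Matrix ((Fin n ⊕ Fin n) ⊕ (Fin n ⊕ Fin n)) ((Fin n ⊕ Fin n) ⊕ (Fin n ⊕ Fin n)) F :=
  Matrix.fromBlocks 1 0 (Matrix.fromBlocks 0 (Itil n r F) (Itil n r F) 0) 1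

/-- The double coset `P₄ₙ(F) αᵣ H₂ₙ,₂ₙ(F)` as a set of matrices. -/
def cosetSet (n r : ℕ) (F : Type*) [Field F] :
    Set (Matrix ((Fin n ⊕ Fin n) ⊕ (Fin n ⊕ Fin n)) ((Fin n ⊕ Fin n) ⊕ (Fin n ⊕ Fin n)) F) :=
  {x | ∃ (p : Matrix ((Fin n ⊕ Fin n) ⊕ (Fin n ⊕ Fin n)) ((Fin n ⊕ Fin n) ⊕ (Fin n ⊕ Fin n)) F)
      (g g' : Matrix (Fin n ⊕ Fin n) (Fin n ⊕ Fin n) F) (μ ν : F),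
    μ ≠ 0 ∧ pᵀ * Jmat (Fin n ⊕ Fin n) F * p = μ • Jmat (Fin n ⊕ Fin n) F ∧
    p.toBlocks₂₁ = 0 ∧
    ν ≠ 0 ∧ gᵀ * Jmat (Fin n) F * g = ν • Jmat (Fin n) F ∧
    g'ᵀ * Jmat (Fin n) F * g' = ν • Jmat (Fin n) F ∧
    x = p * alphaMat n r F * iota g g'}

/-! The invariant separating the double cosets is the rank of the block of `x` formed by its lower
`2n` rows and the `2n` columns on which the first factor of `H₂ₙ,₂ₙ` acts. Left multiplication by
the Siegel parabolic acts on these rows through its invertible lower-right block, and `ι(g, g')`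
acts on these columns through `g` with its off-diagonal blocks negated; for `αᵣ` the block is
`!![0, 1; Ĩᵣ, 0]`, of rank `n + r`. -/

section Symplectic

variable {m : Type*} [DecidableEq m] [Fintype m] {R : Type*} [CommRing R]

lemma isUnit_det_Jmat : IsUnit (Jmat m R).det := by
  apply isUnit_det_of_right_inverse (B := fromBlocks 0 (-1) 1 0)
  simp [Jmat, fromBlocks_multiply, ← fromBlocks_one]

lemma isUnit_det_of_transpose_mul_Jmat_mul_eq_smul {x : Matrix (m ⊕ m) (m ⊕ m) R} {c : R}
    (hc : IsUnit c) (hx : xᵀ * Jmat m R * x = c • Jmat m R) : IsUnit x.det := by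
  have hdet := congrArg det hx
  rw [det_mul, det_mul, det_transpose, det_smul, mul_right_comm] at hdet
  have hsq : IsUnit (x.det * x.det) :=
    (IsUnit.mul_left_inj isUnit_det_Jmat).mp hdet ▸ hc.pow _
  exact isUnit_of_mul_isUnit_left hsq

end Symplectic

section Blocks

variable {m n : Type*} [Fintype m] [Fintype n] {R : Type*} [CommRing R]

lemma isUnit_det_toBlocks₂₂_of_toBlocks₂₁_eq_zero [DecidableEq m] [DecidableEq n]
    {p : Matrix (m ⊕ n) (m ⊕ n) R} (h : p.toBlocks₂₁ = 0) (hp : IsUnit p.det) :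
    IsUnit p.toBlocks₂₂.det := by
  rw [← fromBlocks_toBlocks p, h, det_fromBlocks_zero₂₁] at hp
  exact isUnit_of_mul_isUnit_right hp

lemma submatrix_inr_mul_of_toBlocks₂₁_eq_zero {o ι : Type*} {p : Matrix (m ⊕ n) (m ⊕ n) R}
    (h : p.toBlocks₂₁ = 0) (z : Matrix (m ⊕ n) o R) (col : ι → o) :
    (p * z).submatrix Sum.inr col = p.toBlocks₂₂ * z.submatrix Sum.inr col := by
  have h0 : ∀ i k, p (Sum.inr i) (Sum.inl k) = 0 := fun i k => congrFun (congrFun h i) k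
  ext i j
  simp [mul_apply, Fintype.sum_sum_type, h0, toBlocks₂₂]

def negOffDiag (g : Matrix (m ⊕ m) (m ⊕ m) R) : Matrix (m ⊕ m) (m ⊕ m) R :=
  fromBlocks g.toBlocks₁₁ (-g.toBlocks₁₂) (-g.toBlocks₂₁) g.toBlocks₂₂

lemma det_negOffDiag [DecidableEq m] (g : Matrix (m ⊕ m) (m ⊕ m) R) :
    (negOffDiag g).det = g.det := by
  set D : Matrix (m ⊕ m) (m ⊕ m) R := fromBlocks 1 0 0 (-1)
  have hconj : negOffDiag g = D * g * D := by
    conv_rhs => rw [← fromBlocks_toBlocks g]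
    simp [D, negOffDiag, fromBlocks_multiply]
  have hD : D.det * D.det = 1 := by
    rw [← det_mul, show D * D = 1 by simp [D, fromBlocks_multiply, ← fromBlocks_one], det_one]
  rw [hconj, det_mul, det_mul, mul_right_comm, hD, one_mul]

end Blocks

lemma Fin.card_subtype_sub_le_val (n r : ℕ) (hr : r ≤ n) :
    Fintype.card {i : Fin n // n - r ≤ (i : ℕ)} = r := by
  have hsplit := Finset.card_filter_add_card_filter_not (s := Finset.univ)
    (fun i : Fin n => (i : ℕ) < n - r)
  simp only [not_lt, Fin.card_filter_val_lt, Finset.card_univ, Fintype.card_fin] at hsplit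
  rw [Fintype.card_subtype]
  omega

section Coset

variable {n : ℕ} {F : Type*} [Field F]

def lowerRowsFirstCols
    (x : Matrix ((Fin n ⊕ Fin n) ⊕ (Fin n ⊕ Fin n)) ((Fin n ⊕ Fin n) ⊕ (Fin n ⊕ Fin n)) F) :
    Matrix (Fin n ⊕ Fin n) (Fin n ⊕ Fin n) F :=
  x.submatrix Sum.inr (Sum.map Sum.inl Sum.inl)

lemma lowerRowsFirstCols_mul_iota
    (z : Matrix ((Fin n ⊕ Fin n) ⊕ (Fin n ⊕ Fin n)) ((Fin n ⊕ Fin n) ⊕ (Fin n ⊕ Fin n)) F)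
    (g h : Matrix (Fin n ⊕ Fin n) (Fin n ⊕ Fin n) F) :
    lowerRowsFirstCols (z * iota g h) = lowerRowsFirstCols z * negOffDiag g := by
  ext a b
  rcases b with b | b <;>
    simp [lowerRowsFirstCols, negOffDiag, iota, mul_apply, Fintype.sum_sum_type,
      toBlocks₁₁, toBlocks₁₂, toBlocks₂₁, toBlocks₂₂]

lemma lowerRowsFirstCols_alphaMat (r : ℕ) :
    lowerRowsFirstCols (alphaMat n r F) = fromBlocks 0 1 (Itil n r F) 0 := by
  ext a b
  rcases a with a | a <;> rcases b with b | b <;>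
    simp [lowerRowsFirstCols, alphaMat, one_apply]

lemma rank_lowerRowsFirstCols_alphaMat {r : ℕ} (hr : r ≤ n) :
    (lowerRowsFirstCols (alphaMat n r F)).rank = n + r := by
  classical
  have hswap : (fromBlocks 0 1 (Itil n r F) 0 : Matrix (Fin n ⊕ Fin n) (Fin n ⊕ Fin n) F) =
      (diagonal (Sum.elim (fun _ => 1) fun i : Fin n => if n - r ≤ (i : ℕ) then 1 else 0)).submatrix
        (Equiv.refl _) (Equiv.sumComm _ _) := by
    ext (a | a) (b | b) <;> simp [Itil, one_apply, diagonal_apply]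
  rw [lowerRowsFirstCols_alphaMat, hswap, rank_submatrix, rank_diagonal,
    Fintype.card_congr Equiv.subtypeSum, Fintype.card_sum]
  simpa using Fin.card_subtype_sub_le_val n r hr

lemma rank_lowerRowsFirstCols_of_mem_cosetSet {r : ℕ} (hr : r ≤ n)
    {x : Matrix ((Fin n ⊕ Fin n) ⊕ (Fin n ⊕ Fin n)) ((Fin n ⊕ Fin n) ⊕ (Fin n ⊕ Fin n)) F}
    (hx : x ∈ cosetSet n r F) : (lowerRowsFirstCols x).rank = n + r := by
  obtain ⟨p, g, g', μ, ν, hμ, hp, hp₂₁, hν, hg, -, rfl⟩ := hx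
  have hp₂₂ : IsUnit p.toBlocks₂₂.det := isUnit_det_toBlocks₂₂_of_toBlocks₂₁_eq_zero hp₂₁
    (isUnit_det_of_transpose_mul_Jmat_mul_eq_smul hμ.isUnit hp)
  have hgg : IsUnit (negOffDiag g).det := det_negOffDiag g ▸
    isUnit_det_of_transpose_mul_Jmat_mul_eq_smul hν.isUnit hg
  have hleft : lowerRowsFirstCols (p * alphaMat n r F) =
      p.toBlocks₂₂ * lowerRowsFirstCols (alphaMat n r F) :=
    submatrix_inr_mul_of_toBlocks₂₁_eq_zero hp₂₁ _ _
  rw [lowerRowsFirstCols_mul_iota, hleft, rank_mul_eq_left_of_isUnit_det _ _ hgg,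
    rank_mul_eq_right_of_isUnit_det _ _ hp₂₂, rank_lowerRowsFirstCols_alphaMat hr]

end Coset

/-- Disjointness of the double cosets `P₄ₙ(F) αᵣ H₂ₙ,₂ₙ(F)`, `0 ≤ r ≤ n`
(the disjointness half of Proposition 2.1 of the paper). -/
theorem stmt_19 (n : ℕ) (F : Type*) [Field F] (r s : ℕ)
    (hr : r ≤ n) (hs : s ≤ n) (hrs : r ≠ s) :
    Disjoint (cosetSet n r F) (cosetSet n s F) := by
  refine Set.disjoint_left.mpr fun x hxr hxs => hrs ?_
  have hrank := (rank_lowerRowsFirstCols_of_mem_cosetSet hr hxr).symm.trans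
    (rank_lowerRowsFirstCols_of_mem_cosetSet hs hxs)
  omega
end
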